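/- Let R be a commutative ring, equip the free algebra R⟨X₁,…,Xₙ⟩ with a weight ℕ-gradation determined by positive integer degrees deg Xᵢ = nᵢ, let ≺ be an ℕ-graded monomial ordering on the standard monomial basis B, and let G be a monic Gröbner basis of the ideal I = ⟨G⟩. If the monomial algebra R⟨X₁,…,Xₙ⟩/⟨LM(G)⟩ is von Neumann regular (for every element a there exists x with a·x·a = a), then both R⟨X₁,…,Xₙ⟩/⟨LH(G)⟩ and A = R⟨X₁,…,Xₙ⟩/I are von Neumann regular. -/

import Mathlib

noncomputable section
open MonoidAlgebra
open scoped Classical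

/-- Words in the alphabet `X_1, ..., X_n`: the standard monomial basis `B`. -/
abbrev Word (n : ℕ) : Type := FreeMonoid (Fin n)

/-- The free `R`-algebra `R⟨X_1, ..., X_n⟩`, realized as the monoid algebra of the
free monoid on `n` letters over `R`. -/
abbrev FreeAlg (R : Type) [CommRing R] (n : ℕ) : Type := MonoidAlgebra R (Word n)

variable {R : Type} [CommRing R] {n : ℕ}

/-- The monomial (word) `w` viewed as an element of the free algebra. -/
def mono (R : Type) [CommRing R] {n : ℕ} (w : Word n) : FreeAlg R n :=
  MonoidAlgebra.of R (Word n) w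

/-- A monomial ordering: a well-ordering on words compatible with two-sided multiplication. -/
def IsMonomialOrder (n : ℕ) [LinearOrder (Word n)] : Prop :=
  WellFoundedLT (Word n) ∧ ∀ w u v s : Word n, u < v → w * u * s < w * v * s

/-- The leading monomial of `f` (with junk value `1` for `f = 0`). -/
def LMon [LinearOrder (Word n)] (f : FreeAlg R n) : Word n :=
  if h : f = 0 then 1 else f.coeff.support.max' (Finsupp.support_nonempty_iff.mpr (mt MonoidAlgebra.coeff_eq_zero.mp h))

/-- The leading coefficient of `f`. -/
def LCoef [LinearOrder (Word n)] (f : FreeAlg R n) : R := f.coeff (LMon f)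

/-- `f` is monic: it is nonzero and its leading coefficient is `1`. -/
def IsMonic [LinearOrder (Word n)] (f : FreeAlg R n) : Prop := f ≠ 0 ∧ LCoef f = 1

/-- `v` divides `u` as words: `u = w * v * s` for some words `w, s`. -/
def MDvd {n : ℕ} (v u : Word n) : Prop := ∃ w s : Word n, u = w * v * s

/-- `G` is a monic Gröbner basis of the two-sided ideal `I`: every element of `G` is monic,
and the leading monomial of every nonzero element of `I` is divisible by the leading
monomial of some element of `G`. -/
def IsMonicGB [LinearOrder (Word n)] (G : Set (FreeAlg R n))
    (I : TwoSidedIdeal (FreeAlg R n)) : Prop :=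
  (∀ g ∈ G, IsMonic g) ∧ ∀ f ∈ I, f ≠ 0 → ∃ g ∈ G, MDvd (LMon g) (LMon f)

/-- The set `LM(S)` of leading monomials of the nonzero elements of `S`. -/
def LMset [LinearOrder (Word n)] (S : Set (FreeAlg R n)) : Set (Word n) :=
  {w | ∃ f ∈ S, f ≠ 0 ∧ LMon f = w}

/-- The weight degree of a word, for the weights `deg Xᵢ = d i`. -/
def wdeg {n : ℕ} (d : Fin n → ℕ) (w : Word n) : ℕ := ((FreeMonoid.toList w).map d).sum

/-- The maximal weight degree occurring in `f`. -/
def maxdeg (d : Fin n → ℕ) (f : FreeAlg R n) : ℕ := f.coeff.support.sup (wdeg d)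

/-- The ℕ-leading homogeneous element `LH(f)` of `f`: the sum of the terms of `f` of
maximal weight degree. -/
def LH (d : Fin n → ℕ) (f : FreeAlg R n) : FreeAlg R n :=
  ∑ w ∈ f.coeff.support.filter (fun w => wdeg d w = maxdeg d f), MonoidAlgebra.single w (f.coeff w)

/-- The set `LH(S)` of leading homogeneous elements of the nonzero elements of `S`. -/
def LHset (d : Fin n → ℕ) (S : Set (FreeAlg R n)) : Set (FreeAlg R n) :=
  {x | ∃ f ∈ S, f ≠ 0 ∧ x = LH d f}

/-- An ℕ-graded monomial ordering with respect to the weights `d`: a monomial ordering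
such that words of smaller degree are smaller. -/
def IsGradedMonomialOrder {n : ℕ} (d : Fin n → ℕ) [LinearOrder (Word n)] : Prop :=
  IsMonomialOrder n ∧ ∀ u v : Word n, wdeg d u < wdeg d v → u < v

/-- The quotient ring of the free algebra by a two-sided ideal. -/
abbrev QuotRing (I : TwoSidedIdeal (FreeAlg R n)) : Type := I.ringCon.Quotient

/-!
If `R⟨X⟩/⟨LM(G)⟩` is von Neumann regular, every nonempty word `w` is divisible by some `LM(g)`:
`w x w - w` lies in the monomial ideal `⟨LM(G)⟩`, and since `w x w` only involves longer words,
the word `w` must be a multiple of a generator. Hence reduction by the monic elements of `G`, or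
of `LH(G)` (which have the same leading monomials), brings every element of `R⟨X⟩` to a constant,
so both quotients are images of `R`. Comparing constant terms in `R⟨X⟩/⟨LM(G)⟩` shows that `R` is
von Neumann regular, unless `1 ∈ LM(G)`; but then `1 ∈ G` and all the quotients vanish.
-/

open MonoidAlgebra

lemma MDvd.refl (w : Word n) : MDvd w w := ⟨1, 1, by rw [one_mul, mul_one]⟩

lemma MDvd.mul_left {m v : Word n} (a : Word n) (h : MDvd m v) : MDvd m (a * v) := by
  obtain ⟨u, s, rfl⟩ := h
  exact ⟨a * u, s, by simp only [mul_assoc]⟩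

lemma MDvd.mul_right {m v : Word n} (a : Word n) (h : MDvd m v) : MDvd m (v * a) := by
  obtain ⟨u, s, rfl⟩ := h
  exact ⟨u, s * a, by simp only [mul_assoc]⟩

lemma MDvd.eq_one {m : Word n} (h : MDvd m 1) : m = 1 := by
  obtain ⟨u, v, huv⟩ := h
  have := congrArg FreeMonoid.length huv
  simp only [FreeMonoid.length_one, FreeMonoid.length_mul] at this
  exact FreeMonoid.length_eq_zero.mp (by omega)

lemma ne_mul_mul_self {w : Word n} (hw : w ≠ 1) (t : Word n) : w ≠ w * t * w := by
  intro h
  have := congrArg FreeMonoid.length h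
  simp only [FreeMonoid.length_mul] at this
  exact hw (FreeMonoid.length_eq_zero.mp (by omega))

lemma IsMonomialOrder.one_le [LinearOrder (Word n)] (hmo : IsMonomialOrder n) (w : Word n) :
    1 ≤ w := by
  by_contra! hw
  obtain ⟨m, hm, hmin⟩ := hmo.1.wf.has_min {w | w < 1} ⟨w, hw⟩
  have hmm : m * m < m := by simpa using hmo.2 m m 1 1 hm
  exact hmin (m * m) (hmm.trans hm) hmm

lemma IsMonomialOrder.mul_le_mul [LinearOrder (Word n)] (hmo : IsMonomialOrder n)
    {t m : Word n} (h : t ≤ m) (u v : Word n) : u * t * v ≤ u * m * v := by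
  rcases h.lt_or_eq with h | rfl
  · exact (hmo.2 u t m v h).le
  · exact le_rfl

lemma coeff_single_mul_mul_single (f : FreeAlg R n) (u v t : Word n) (c c' : R) :
    (single u c * f * single v c').coeff (u * t * v) = c * f.coeff t * c' := by
  rw [coeff_mul_single_eq_coeff_mul (u * t) fun a _ => ⟨mul_right_cancel, by rintro rfl; rfl⟩,
    coeff_single_mul_eq_mul_coeff t fun a _ => ⟨mul_left_cancel, by rintro rfl; rfl⟩]

lemma exists_of_mem_support_single_mul_mul_single {f : FreeAlg R n} {u v w : Word n} {c c' : R}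
    (hw : w ∈ (single u c * f * single v c').coeff.support) :
    ∃ t ∈ f.coeff.support, u * t * v = w := by
  obtain ⟨b, hb, rfl⟩ := Finset.mem_image.mp (support_coeff_mul_single_subset _ c' v hw)
  obtain ⟨t, ht, rfl⟩ := Finset.mem_image.mp (support_coeff_single_mul_subset f c u hb)
  exact ⟨t, ht, rfl⟩

namespace QuotRing

variable {I : TwoSidedIdeal (FreeAlg R n)}

lemma mk_eq_mk_iff_sub_mem {f g : FreeAlg R n} : (f : QuotRing I) = g ↔ f - g ∈ I :=
  (RingCon.eq _).trans (I.rel_iff f g)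

lemma mk_surjective (a : QuotRing I) : ∃ f : FreeAlg R n, (f : QuotRing I) = a :=
  I.ringCon.mk'_surjective a

lemma exists_mul_mul_eq_of_one_mem (h : 1 ∈ I) (a : QuotRing I) : ∃ x, a * x * a = a := by
  have : Subsingleton (QuotRing I) := subsingleton_of_zero_eq_one <| by
    rw [← RingCon.coe_zero, ← RingCon.coe_one, mk_eq_mk_iff_sub_mem, zero_sub]
    exact I.neg_mem h
  exact ⟨a, Subsingleton.elim _ _⟩

end QuotRing

section LeadingMonomial

variable [LinearOrder (Word n)]

lemma LMon_zero : LMon (0 : FreeAlg R n) = 1 := dif_pos rfl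

lemma LMon_mem_support {f : FreeAlg R n} (hf : f ≠ 0) : LMon f ∈ f.coeff.support := by
  rw [LMon, dif_neg hf]
  exact Finset.max'_mem _ _

lemma le_LMon {f : FreeAlg R n} (hf : f ≠ 0) {w : Word n} (hw : w ∈ f.coeff.support) :
    w ≤ LMon f := by
  rw [LMon, dif_neg hf]
  exact Finset.le_max' _ _ hw

lemma LCoef_ne_zero {f : FreeAlg R n} (hf : f ≠ 0) : LCoef f ≠ 0 :=
  Finsupp.mem_support_iff.mp (LMon_mem_support hf)

lemma LMon_lt_of_forall_mem_support_lt {f : FreeAlg R n} {w : Word n} (hw : 1 < w)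
    (h : ∀ t ∈ f.coeff.support, t < w) : LMon f < w := by
  rcases eq_or_ne f 0 with rfl | hf
  · rwa [LMon_zero]
  · exact h _ (LMon_mem_support hf)

lemma eq_single_one_of_LMon_eq_one (hmo : IsMonomialOrder n) {f : FreeAlg R n}
    (h : LMon f = 1) : f = single 1 (f.coeff 1) := by
  rcases eq_or_ne f 0 with rfl | hf
  · simp
  ext w
  rcases eq_or_ne w 1 with rfl | hw
  · simp
  rw [coeff_single, Finsupp.single_eq_of_ne' (Ne.symm hw)]
  by_contra hc
  have hle := le_LMon hf (Finsupp.mem_support_iff.mpr hc)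
  exact hw (le_antisymm (h ▸ hle) (hmo.one_le w))

lemma IsMonic.eq_one_of_LMon_eq_one (hmo : IsMonomialOrder n) {f : FreeAlg R n}
    (hf : IsMonic f) (h : LMon f = 1) : f = 1 := by
  rw [eq_single_one_of_LMon_eq_one hmo h, ← h, ← LCoef, hf.2, h, one_def]

lemma lt_LMon_of_mem_support_sub (hmo : IsMonomialOrder n) {f h : FreeAlg R n} (hf : f ≠ 0)
    (hh : IsMonic h) {u v : Word n} (huv : LMon f = u * LMon h * v) :
    ∀ t ∈ (f - single u (LCoef f) * h * single v 1).coeff.support, t < LMon f := by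
  set q := single u (LCoef f) * h * single v 1
  have hq_le : ∀ t ∈ q.coeff.support, t ≤ LMon f := by
    intro t ht
    obtain ⟨t', ht', rfl⟩ := exists_of_mem_support_single_mul_mul_single ht
    exact huv ▸ hmo.mul_le_mul (le_LMon hh.1 ht') u v
  have hq_top : q.coeff (LMon f) = LCoef f := by
    rw [huv, coeff_single_mul_mul_single, ← LCoef, hh.2, mul_one, mul_one]
  intro t ht
  have hle : t ≤ LMon f := by
    rcases Finset.mem_union.mp (Finsupp.support_sub ht) with ht | ht
    · exact le_LMon hf ht
    · exact hq_le t ht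
  refine hle.lt_of_ne ?_
  rintro rfl
  apply Finsupp.mem_support_iff.mp ht
  rw [coeff_sub, Finsupp.sub_apply, hq_top, LCoef, sub_self]

theorem exists_sub_single_one_mem_span (hmo : IsMonomialOrder n) {S : Set (FreeAlg R n)}
    (hmon : ∀ h ∈ S, IsMonic h) (hcov : ∀ w : Word n, w ≠ 1 → ∃ h ∈ S, MDvd (LMon h) w)
    (f : FreeAlg R n) : ∃ r : R, f - single 1 r ∈ TwoSidedIdeal.span S := by
  induction f using (InvImage.wf LMon hmo.1.wf).induction with
  | _ f ih =>
  rcases (hmo.one_le (LMon f)).eq_or_lt with h1 | h1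
  · refine ⟨f.coeff 1, ?_⟩
    rw [← eq_single_one_of_LMon_eq_one hmo h1.symm, sub_self]
    exact TwoSidedIdeal.zero_mem _
  have hf : f ≠ 0 := by
    rintro rfl
    simp [LMon_zero] at h1
  obtain ⟨h, hS, u, v, huv⟩ := hcov _ h1.ne'
  obtain ⟨r, hr⟩ := ih _ <| LMon_lt_of_forall_mem_support_lt h1 <|
    lt_LMon_of_mem_support_sub hmo hf (hmon h hS) huv
  have hq : single u (LCoef f) * h * single v 1 ∈ TwoSidedIdeal.span S :=
    TwoSidedIdeal.mul_mem_right _ _ _ <|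
      TwoSidedIdeal.mul_mem_left _ _ _ (TwoSidedIdeal.subset_span hS)
  refine ⟨r, ?_⟩
  convert TwoSidedIdeal.add_mem _ hr hq using 1
  abel

end LeadingMonomial

section LeadingHomogeneous

variable (d : Fin n → ℕ)

lemma coeff_LH (f : FreeAlg R n) (w : Word n) :
    (LH d f).coeff w = if wdeg d w = maxdeg d f then f.coeff w else 0 := by
  rw [LH, coeff_sum, Finset.sum_apply']
  simp only [coeff_single, Finsupp.single_apply]
  rw [Finset.sum_ite_eq' _ w (fun w' => f.coeff w')]
  by_cases hw : w ∈ f.coeff.support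
  · simp [Finset.mem_filter, hw]
  · simp [Finset.mem_filter, hw, Finsupp.notMem_support_iff.mp hw]

lemma support_LH_subset (f : FreeAlg R n) : (LH d f).coeff.support ⊆ f.coeff.support := by
  intro w hw
  rw [Finsupp.mem_support_iff, coeff_LH] at hw
  rw [Finsupp.mem_support_iff]
  split_ifs at hw
  · exact hw
  · exact absurd rfl hw

variable [LinearOrder (Word n)] {d}

lemma maxdeg_eq_wdeg_LMon (hord : IsGradedMonomialOrder d) {f : FreeAlg R n} (hf : f ≠ 0) :
    maxdeg d f = wdeg d (LMon f) := by
  refine le_antisymm (Finset.sup_le fun t ht => ?_) (Finset.le_sup (LMon_mem_support hf))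
  by_contra! hlt
  exact (le_LMon hf ht).not_gt (hord.2 _ _ hlt)

lemma coeff_LH_LMon (hord : IsGradedMonomialOrder d) {f : FreeAlg R n} (hf : f ≠ 0) :
    (LH d f).coeff (LMon f) = LCoef f := by
  rw [coeff_LH, maxdeg_eq_wdeg_LMon hord hf, if_pos rfl, LCoef]

lemma LH_ne_zero (hord : IsGradedMonomialOrder d) {f : FreeAlg R n} (hf : f ≠ 0) :
    LH d f ≠ 0 := by
  intro h
  exact LCoef_ne_zero hf (by rw [← coeff_LH_LMon hord hf, h, coeff_zero, Finsupp.coe_zero,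
    Pi.zero_apply])

lemma LMon_LH (hord : IsGradedMonomialOrder d) {f : FreeAlg R n} (hf : f ≠ 0) :
    LMon (LH d f) = LMon f := by
  have hLH := LH_ne_zero hord hf
  refine le_antisymm (le_LMon hf (support_LH_subset d f (LMon_mem_support hLH))) (le_LMon hLH ?_)
  rw [Finsupp.mem_support_iff, coeff_LH_LMon hord hf]
  exact LCoef_ne_zero hf

lemma isMonic_LH (hord : IsGradedMonomialOrder d) {f : FreeAlg R n} (hf : IsMonic f) :
    IsMonic (LH d f) :=
  ⟨LH_ne_zero hord hf.1, by rw [LCoef, LMon_LH hord hf.1, coeff_LH_LMon hord hf.1, hf.2]⟩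

end LeadingHomogeneous

def monomialIdeal (M : Set (Word n)) : TwoSidedIdeal (FreeAlg R n) :=
  TwoSidedIdeal.mk' {f | ∀ v ∈ f.coeff.support, ∃ m ∈ M, MDvd m v}
    (by simp)
    (fun hx hy v hv => (Finset.mem_union.mp (Finsupp.support_add hv)).elim (hx v) (hy v))
    (fun hx v hv => hx v (by rwa [coeff_neg, Finsupp.support_neg] at hv))
    (fun {x _} hy v hv => by
      obtain ⟨a, -, b, hb, rfl⟩ := Finset.mem_mul.mp (support_coeff_mul_subset x _ hv)
      obtain ⟨m, hm, hdvd⟩ := hy b hb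
      exact ⟨m, hm, hdvd.mul_left a⟩)
    (fun {_ y} hx v hv => by
      obtain ⟨a, ha, b, -, rfl⟩ := Finset.mem_mul.mp (support_coeff_mul_subset _ y hv)
      obtain ⟨m, hm, hdvd⟩ := hx a ha
      exact ⟨m, hm, hdvd.mul_right b⟩)

lemma span_mono_le_monomialIdeal (M : Set (Word n)) :
    TwoSidedIdeal.span (mono R '' M) ≤ monomialIdeal M := by
  rw [TwoSidedIdeal.span_le]
  rintro _ ⟨m, hm, rfl⟩
  rw [SetLike.mem_coe, monomialIdeal, TwoSidedIdeal.mem_mk']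
  intro v hv
  rw [mono, of_apply, coeff_single] at hv
  exact ⟨m, hm, Finset.mem_singleton.mp (Finsupp.support_single_subset hv) ▸ MDvd.refl m⟩

lemma coeff_eq_zero_of_mem_span_mono {M : Set (Word n)} {f : FreeAlg R n}
    (hf : f ∈ TwoSidedIdeal.span (mono R '' M)) {w : Word n} (hw : ∀ m ∈ M, ¬MDvd m w) :
    f.coeff w = 0 := by
  have hf' := span_mono_le_monomialIdeal M hf
  rw [monomialIdeal, TwoSidedIdeal.mem_mk'] at hf'
  by_contra h
  obtain ⟨m, hm, hdvd⟩ := hf' w (Finsupp.mem_support_iff.mpr h)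
  exact hw m hm hdvd

lemma exists_mdvd_of_vonNeumannRegular [Nontrivial R] {M : Set (Word n)}
    (hV : ∀ a : QuotRing (TwoSidedIdeal.span (mono R '' M)), ∃ x, a * x * a = a)
    {w : Word n} (hw : w ≠ 1) : ∃ m ∈ M, MDvd m w := by
  by_contra! hM
  obtain ⟨x, hx⟩ := hV (mono R w)
  obtain ⟨f, rfl⟩ := QuotRing.mk_surjective x
  rw [← RingCon.coe_mul, ← RingCon.coe_mul, QuotRing.mk_eq_mk_iff_sub_mem] at hx
  simp only [mono, of_apply] at hx
  have hwfw : (single w 1 * f * single w 1).coeff w = 0 := by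
    by_contra h
    obtain ⟨t, -, ht⟩ :=
      exists_of_mem_support_single_mul_mul_single (Finsupp.mem_support_iff.mpr h)
    exact ne_mul_mul_self hw t ht.symm
  have h0 := coeff_eq_zero_of_mem_span_mono hx hM
  rw [coeff_sub, Finsupp.sub_apply, hwfw, coeff_single, Finsupp.single_eq_same, zero_sub,
    neg_eq_zero] at h0
  exact one_ne_zero h0

lemma exists_mul_mul_eq_of_vonNeumannRegular {M : Set (Word n)} (hM : 1 ∉ M)
    (hV : ∀ a : QuotRing (TwoSidedIdeal.span (mono R '' M)), ∃ x, a * x * a = a) (r : R) :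
    ∃ s, r * s * r = r := by
  obtain ⟨x, hx⟩ := hV (single 1 r : FreeAlg R n)
  obtain ⟨f, rfl⟩ := QuotRing.mk_surjective x
  rw [← RingCon.coe_mul, ← RingCon.coe_mul, QuotRing.mk_eq_mk_iff_sub_mem] at hx
  refine ⟨f.coeff 1, ?_⟩
  have h0 := coeff_eq_zero_of_mem_span_mono hx (w := 1) fun m hm h => hM (h.eq_one ▸ hm)
  have hc := coeff_single_mul_mul_single f 1 1 1 r r
  rw [mul_one, mul_one] at hc
  rwa [coeff_sub, Finsupp.sub_apply, hc, coeff_single, Finsupp.single_eq_same, sub_eq_zero] at h0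

theorem vonNeumannRegular_quot_span [LinearOrder (Word n)] (hmo : IsMonomialOrder n)
    (hR : ∀ r : R, ∃ s, r * s * r = r) {S : Set (FreeAlg R n)} (hmon : ∀ h ∈ S, IsMonic h)
    (hcov : ∀ w : Word n, w ≠ 1 → ∃ h ∈ S, MDvd (LMon h) w) (a : QuotRing (TwoSidedIdeal.span S)) :
    ∃ x, a * x * a = a := by
  obtain ⟨f, rfl⟩ := QuotRing.mk_surjective a
  obtain ⟨r, hr⟩ := exists_sub_single_one_mem_span hmo hmon hcov f
  obtain ⟨s, hs⟩ := hR r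
  refine ⟨(single 1 s : FreeAlg R n), ?_⟩
  rw [QuotRing.mk_eq_mk_iff_sub_mem.mpr hr, ← RingCon.coe_mul, ← RingCon.coe_mul, single_mul_single,
    single_mul_single, one_mul, one_mul, hs]

theorem vonNeumannRegular_lifts_general [LinearOrder (Word n)]
    (d : Fin n → ℕ) (hord : IsGradedMonomialOrder d)
    (G : Set (FreeAlg R n)) (hGB : IsMonicGB G (TwoSidedIdeal.span G))
    (hV : ∀ a : QuotRing (TwoSidedIdeal.span (mono R '' LMset G)), ∃ x, a * x * a = a) :
    (∀ a : QuotRing (TwoSidedIdeal.span (LHset d G)), ∃ x, a * x * a = a) ∧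
    (∀ a : QuotRing (TwoSidedIdeal.span G), ∃ x, a * x * a = a) := by
  rcases subsingleton_or_nontrivial R with _ | _
  · constructor <;> exact QuotRing.exists_mul_mul_eq_of_one_mem
      (Subsingleton.elim (0 : FreeAlg R n) 1 ▸ TwoSidedIdeal.zero_mem _)
  by_cases hG1 : (1 : Word n) ∈ LMset G
  · obtain ⟨g, hgG, hg0, hg1⟩ := hG1
    have hg := hGB.1 g hgG
    have hLH : LH d g = 1 :=
      (isMonic_LH hord hg).eq_one_of_LMon_eq_one hord.1 (by rw [LMon_LH hord hg0, hg1])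
    exact ⟨QuotRing.exists_mul_mul_eq_of_one_mem
        (TwoSidedIdeal.subset_span ⟨g, hgG, hg0, hLH.symm⟩),
      QuotRing.exists_mul_mul_eq_of_one_mem
        (TwoSidedIdeal.subset_span (hg.eq_one_of_LMon_eq_one hord.1 hg1 ▸ hgG))⟩
  have hRv := exists_mul_mul_eq_of_vonNeumannRegular hG1 hV
  have hcov (w : Word n) (hw : w ≠ 1) : ∃ g ∈ G, g ≠ 0 ∧ MDvd (LMon g) w := by
    obtain ⟨_, ⟨g, hgG, hg0, rfl⟩, hdvd⟩ := exists_mdvd_of_vonNeumannRegular hV hw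
    exact ⟨g, hgG, hg0, hdvd⟩
  refine ⟨vonNeumannRegular_quot_span hord.1 hRv ?_ ?_,
    vonNeumannRegular_quot_span hord.1 hRv hGB.1 ?_⟩
  · rintro _ ⟨g, hgG, -, rfl⟩
    exact isMonic_LH hord (hGB.1 g hgG)
  · intro w hw
    obtain ⟨g, hgG, hg0, hdvd⟩ := hcov w hw
    exact ⟨LH d g, ⟨g, hgG, hg0, rfl⟩, (LMon_LH hord hg0).symm ▸ hdvd⟩
  · intro w hw
    obtain ⟨g, hgG, -, hdvd⟩ := hcov w hw
    exact ⟨g, hgG, hdvd⟩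

/-- If `G` is a monic Gröbner basis of `I = ⟨G⟩` with respect to an
ℕ-graded monomial ordering and the monomial algebra `R⟨X⟩/⟨LM(G)⟩` is von Neumann regular, then so are
`R⟨X⟩/⟨LH(G)⟩` and `A = R⟨X⟩/I`. -/
theorem vonNeumannRegular_lifts [LinearOrder (Word n)]
    (d : Fin n → ℕ) (hd : ∀ i, 0 < d i) (hord : IsGradedMonomialOrder d)
    (G : Set (FreeAlg R n)) (hGB : IsMonicGB G (TwoSidedIdeal.span G))
    (hV : ∀ a : QuotRing (TwoSidedIdeal.span (mono R '' LMset G)), ∃ x, a * x * a = a) :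
    (∀ a : QuotRing (TwoSidedIdeal.span (LHset d G)), ∃ x, a * x * a = a) ∧
    (∀ a : QuotRing (TwoSidedIdeal.span G), ∃ x, a * x * a = a) :=
  vonNeumannRegular_lifts_general d hord G hGB hV
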